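/- Let V be a finite-dimensional real inner product space, φ an alternating p-form of comass one on V, and Ω ⊆ V a bounded open set with C^∞ defining function ρ : W → ℝ on an open set W containing the closure of Ω (Ω = {x ∈ W : ρ(x) < 0}, ∂Ω = {x ∈ W : ρ(x) = 0}, and Dρ(x) ≠ 0 on ∂Ω) whose boundary is strictly φ-convex: for every x ∈ ∂Ω and every φ-plane (e₁,…,e_p) ∈ G(φ) with Dρ(x)(e_j) = 0 for all j, Σ_{j=1}^p D²ρ(x)(e_j,e_j) > 0. Then there exists A₀ > 0 such that for every A ≥ A₀ there is an open set U with ∂Ω ⊆ U ⊆ W on which the function ρ̄ := ρ + A·ρ² satisfies: Σ_{j=1}^p D²ρ̄(x)(e_j,e_j) > 0 for every x ∈ U and every φ-plane (e₁,…,e_p) ∈ G(φ); moreover Dρ̄(x) = Dρ(x) ≠ 0 for x ∈ ∂Ω, and {x ∈ U : ρ̄(x) < 0} = Ω ∩ U. (Proposition 5.7, Euclidean case) -/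

import Mathlib

/-!
On `∂Ω` we have `ρ = 0`, so the trace of `D²(ρ + Aρ²)` over a `φ`-plane `e` is
`2A ∑ⱼ (Dρ eⱼ)² + ∑ⱼ D²ρ(eⱼ, eⱼ)`. The first sum is nonnegative and vanishes only when `e` is
tangent to `∂Ω`, where strict `φ`-convexity makes the second sum positive; since `∂Ω × G(φ)` is
compact, a single `A₀` makes the expression positive on all of it. Positivity then persists on a
neighbourhood `U` of `∂Ω` (again by compactness of `G(φ)`), and shrinking `U` so that
`1 + Aρ > 0` there makes `ρ + Aρ² = ρ (1 + Aρ)` have the sign of `ρ`.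
-/

open scoped Topology
open Set Filter

theorem MultilinearMap.continuous_of_finiteDimensional {𝕜 ι E F : Type*}
    [NontriviallyNormedField 𝕜] [CompleteSpace 𝕜] [Fintype ι]
    [NormedAddCommGroup E] [NormedSpace 𝕜 E] [FiniteDimensional 𝕜 E]
    [AddCommGroup F] [Module 𝕜 F] [TopologicalSpace F] [IsTopologicalAddGroup F]
    [ContinuousSMul 𝕜 F] (f : MultilinearMap 𝕜 (fun _ : ι => E) F) : Continuous f := by
  classical
  let b := Module.finBasis 𝕜 E
  have hexpand : ⇑f = fun e => ∑ r : ι → Fin (Module.finrank 𝕜 E),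
      (∏ i, b.repr (e i) (r i)) • f fun i => b (r i) := by
    funext e
    conv_lhs => rw [← funext fun i => b.sum_repr (e i)]
    simp only [f.map_sum, f.map_smul_univ]
  have hcoord (k) : Continuous fun v : E => b.repr v k :=
    (b.coord k).continuous_of_finiteDimensional
  rw [hexpand]
  fun_prop

theorem isCompact_setOf_orthonormal {𝕜 ι E : Type*} [RCLike 𝕜] [Fintype ι]
    [NormedAddCommGroup E] [InnerProductSpace 𝕜 E] [FiniteDimensional 𝕜 E] :
    IsCompact {e : ι → E | Orthonormal 𝕜 e} := by
  classical
  have := FiniteDimensional.proper_rclike 𝕜 E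
  refine Metric.isCompact_of_isClosed_isBounded ?_ ?_
  · simp only [orthonormal_iff_ite, ofPred_forall]
    exact isClosed_iInter fun i => isClosed_iInter fun j =>
      isClosed_eq ((continuous_apply i).inner (continuous_apply j)) continuous_const
  · refine (isBounded_iff_forall_norm_le).2 ⟨1, fun e he => ?_⟩
    exact (pi_norm_le_iff_of_nonneg zero_le_one).2 fun i => (he.1 i).le

theorem IsCompact.eventually_forall_pos_mul_add {X : Type*} [TopologicalSpace X] [T2Space X]
    {K : Set X} (hK : IsCompact K) {G Q : X → ℝ} (hG : ContinuousOn G K)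
    (hQ : ContinuousOn Q K) (hG0 : ∀ z ∈ K, 0 ≤ G z) (hGQ : ∀ z ∈ K, G z = 0 → 0 < Q z) :
    ∀ᶠ A in atTop, ∀ z ∈ K, 0 < A * G z + Q z := by
  -- On the compact set where `Q ≤ 0`, `G` is bounded below by some `m > 0`.
  have hK' : IsCompact (K ∩ Q ⁻¹' Iic 0) :=
    hK.of_isClosed_subset (hQ.preimage_isClosed_of_isClosed hK.isClosed isClosed_Iic)
      inter_subset_left
  obtain ⟨m, hm, hGm⟩ := hK'.exists_forall_le' (hG.mono inter_subset_left)
    fun z ⟨hzK, hQz⟩ => (hG0 z hzK).lt_of_ne' fun h => (hGQ z hzK h).not_ge hQz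
  obtain ⟨M, hM⟩ := hK.bddBelow_image hQ
  filter_upwards [eventually_ge_atTop 0, eventually_gt_atTop (-M / m)] with A hA0 hAM z hz
  have hQM : M ≤ Q z := hM (mem_image_of_mem Q hz)
  rcases le_or_gt (Q z) 0 with hQz | hQz
  · have hGz : m ≤ G z := hGm z ⟨hz, hQz⟩
    have hAm : -M < A * m := (div_lt_iff₀ hm).1 hAM
    nlinarith
  · nlinarith [hG0 z hz]

lemma add_mul_sq_neg_iff {A t : ℝ} (h : 0 < 1 + A * t) : t + A * t ^ 2 < 0 ↔ t < 0 := by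
  rw [show t + A * t ^ 2 = t * (1 + A * t) by ring]
  exact ⟨fun h' => neg_of_mul_neg_left h' h.le, fun h' => mul_neg_of_neg_of_pos h' h⟩

section

variable {E ι : Type*} [NormedAddCommGroup E] [NormedSpace ℝ E] [Fintype ι]

noncomputable def hessianTrace (f : E → ℝ) (x : E) (e : ι → E) : ℝ :=
  ∑ j, iteratedFDeriv ℝ 2 f x ![e j, e j]

theorem HasFDerivAt.add_mul_sq {f : E → ℝ} {f' : E →L[ℝ] ℝ} {x : E}
    (hf : HasFDerivAt f f' x) (A : ℝ) :
    HasFDerivAt (fun y => f y + A * f y ^ 2) ((1 + 2 * A * f x) • f') x := by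
  refine (hf.add ((hf.pow 2).const_mul A)).congr_fderiv ?_
  ext v
  simp only [Nat.add_one_sub_one, pow_one, nsmul_eq_mul, Nat.cast_ofNat,
    add_apply, smul_apply, smul_eq_mul]
  ring

theorem iteratedFDeriv_two_add_mul_sq_apply {f : E → ℝ} {x : E} (hf : ContDiffAt ℝ 2 f x)
    (A : ℝ) (v : E) :
    iteratedFDeriv ℝ 2 (fun y => f y + A * f y ^ 2) x ![v, v] =
      2 * A * fderiv ℝ f x v ^ 2 + (1 + 2 * A * f x) * iteratedFDeriv ℝ 2 f x ![v, v] := by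
  have hfderiv : fderiv ℝ (fun y => f y + A * f y ^ 2) =ᶠ[𝓝 x]
      fun y => (1 + 2 * A * f y) • fderiv ℝ f y :=
    (hf.eventually (by simp)).mono fun y hy =>
      ((hy.differentiableAt (by simp)).hasFDerivAt.add_mul_sq A).fderiv
  have hcoeff : HasFDerivAt (fun y => 1 + 2 * A * f y) ((2 * A) • fderiv ℝ f x) x :=
    ((hf.differentiableAt (by simp)).hasFDerivAt.const_mul (2 * A)).const_add 1
  have hF : HasFDerivAt (fderiv ℝ f) (fderiv ℝ (fderiv ℝ f) x) x :=
    ((hf.fderiv_right (m := 1) (by norm_num)).differentiableAt (by simp)).hasFDerivAt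
  have hprod : HasFDerivAt (fun y => (1 + 2 * A * f y) • fderiv ℝ f y) _ x := hcoeff.smul hF
  rw [iteratedFDeriv_two_apply, hfderiv.fderiv_eq, hprod.fderiv,
    iteratedFDeriv_two_apply]
  simp only [Matrix.cons_val_zero, Matrix.cons_val_one, Matrix.cons_val_fin_one,
    add_apply, smul_apply, ContinuousLinearMap.smulRight_apply, smul_eq_mul]
  ring

theorem hessianTrace_add_mul_sq {f : E → ℝ} {x : E} (hf : ContDiffAt ℝ 2 f x) (A : ℝ)
    (e : ι → E) :
    hessianTrace (fun y => f y + A * f y ^ 2) x e =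
      2 * A * ∑ j, fderiv ℝ f x (e j) ^ 2 + (1 + 2 * A * f x) * hessianTrace f x e := by
  simp only [hessianTrace, iteratedFDeriv_two_add_mul_sq_apply hf, Finset.sum_add_distrib,
    Finset.mul_sum]

theorem ContDiffOn.continuousOn_hessianTrace {f : E → ℝ} {s : Set E} (hf : ContDiffOn ℝ 2 f s)
    (hs : IsOpen s) :
    ContinuousOn (fun z : E × (ι → E) => hessianTrace f z.1 z.2) (s ×ˢ univ) := by
  have hD2 : ContinuousOn (iteratedFDeriv ℝ 2 f) s :=
    (hf.continuousOn_iteratedFDerivWithin le_rfl hs.uniqueDiffOn).congr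
      fun x hx => (iteratedFDerivWithin_of_isOpen 2 hs hx).symm
  exact continuousOn_finsetSum _ fun j _ =>
    (hD2.comp continuousOn_fst fun z hz => hz.1).eval (by fun_prop)

theorem ContDiffOn.continuousOn_sum_fderiv_sq {f : E → ℝ} {s : Set E} (hf : ContDiffOn ℝ 2 f s)
    (hs : IsOpen s) :
    ContinuousOn (fun z : E × (ι → E) => ∑ j, fderiv ℝ f z.1 (z.2 j) ^ 2) (s ×ˢ univ) := by
  have hD : ContinuousOn (fderiv ℝ f) s := hf.continuousOn_fderiv_of_isOpen hs (by norm_num)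
  refine continuousOn_finsetSum _ fun j _ => ContinuousOn.pow ?_ 2
  exact (hD.comp continuousOn_fst fun z hz => hz.1).clm_apply (by fun_prop)

theorem ContDiffOn.isOpen_setOf_forall_hessianTrace_pos {f : E → ℝ} {s : Set E}
    (hf : ContDiffOn ℝ 2 f s) (hs : IsOpen s) {S : Set (ι → E)} (hS : IsCompact S) :
    IsOpen {x ∈ s | ∀ e ∈ S, 0 < hessianTrace f x e} := by
  refine isOpen_iff_mem_nhds.2 fun x ⟨hx, hpos⟩ => ?_
  have hcont := hf.continuousOn_hessianTrace (ι := ι) hs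
  have hnear : ∀ e ∈ S, ∀ᶠ z : E × (ι → E) in 𝓝 (x, e), 0 < hessianTrace f z.1 z.2 :=
    fun e he => (hcont.continuousAt ((hs.prod isOpen_univ).mem_nhds ⟨hx, trivial⟩)).eventually
      (lt_mem_nhds (hpos e he))
  filter_upwards [hs.mem_nhds hx,
    hS.eventually_forall_of_forall_eventually (P := fun y e => 0 < hessianTrace f y e) hnear]
    with y hy h using ⟨hy, h⟩

theorem eventually_hessianTrace_add_mul_sq_pos {f : E → ℝ} {s K : Set E} {S : Set (ι → E)}
    (hf : ContDiffOn ℝ 2 f s) (hs : IsOpen s) (hKs : K ⊆ s) (hK : IsCompact K)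
    (hS : IsCompact S) (hfK : ∀ x ∈ K, f x = 0)
    (hconv : ∀ x ∈ K, ∀ e ∈ S, (∀ j, fderiv ℝ f x (e j) = 0) → 0 < hessianTrace f x e) :
    ∀ᶠ A in atTop, ∀ x ∈ K, ∀ e ∈ S, 0 < hessianTrace (fun y => f y + A * f y ^ 2) x e := by
  have hKS : K ×ˢ S ⊆ s ×ˢ univ := prod_mono hKs (subset_univ S)
  have hpenalty := (hK.prod hS).eventually_forall_pos_mul_add
    (G := fun z => 2 * ∑ j, fderiv ℝ f z.1 (z.2 j) ^ 2) (Q := fun z => hessianTrace f z.1 z.2)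
    ((continuousOn_const.mul (hf.continuousOn_sum_fderiv_sq hs)).mono hKS)
    ((hf.continuousOn_hessianTrace hs).mono hKS) (fun z _ => by positivity)
    fun z hz hG => hconv z.1 hz.1 z.2 hz.2 fun j => by
      have hsum : ∑ j, fderiv ℝ f z.1 (z.2 j) ^ 2 = 0 := by linarith
      exact pow_eq_zero_iff two_ne_zero |>.1 <|
        (Finset.sum_eq_zero_iff_of_nonneg fun j _ => sq_nonneg _).1 hsum j (Finset.mem_univ j)
  filter_upwards [hpenalty] with A hA x hx e he
  rw [hessianTrace_add_mul_sq (hf.contDiffAt (hs.mem_nhds (hKs hx))), hfK x hx]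
  convert hA (x, e) ⟨hx, he⟩ using 1
  ring

end

variable {V : Type*} [NormedAddCommGroup V] [InnerProductSpace ℝ V] [FiniteDimensional ℝ V]

theorem defining_function_plus_square_general {p : ℕ}
    (φ : V [⋀^Fin p]→ₗ[ℝ] ℝ)
    (Ω W : Set V) (hΩb : Bornology.IsBounded Ω) (hWo : IsOpen W)
    (hWcl : closure Ω ⊆ W)
    (ρ : V → ℝ) (hρ : ContDiffOn ℝ (⊤ : ℕ∞) ρ W)
    (hΩdef : Ω = {x ∈ W | ρ x < 0})
    (hbdry : frontier Ω = {x ∈ W | ρ x = 0})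
    (hgrad : ∀ x ∈ frontier Ω, fderiv ℝ ρ x ≠ 0)
    (hconv : ∀ x ∈ frontier Ω, ∀ e : Fin p → V, Orthonormal ℝ e → φ e = 1 →
      (∀ j, fderiv ℝ ρ x (e j) = 0) →
      0 < ∑ j, iteratedFDeriv ℝ 2 ρ x ![e j, e j]) :
    ∃ A₀ : ℝ, 0 < A₀ ∧ ∀ A : ℝ, A₀ ≤ A →
      ∃ U : Set V, IsOpen U ∧ frontier Ω ⊆ U ∧ U ⊆ W ∧
        (∀ x ∈ U, ∀ e : Fin p → V, Orthonormal ℝ e → φ e = 1 →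
          0 < ∑ j, iteratedFDeriv ℝ 2 (fun y => ρ y + A * (ρ y) ^ 2) x ![e j, e j]) ∧
        (∀ x ∈ frontier Ω,
          fderiv ℝ (fun y => ρ y + A * (ρ y) ^ 2) x = fderiv ℝ ρ x ∧ fderiv ℝ ρ x ≠ 0) ∧
        {x ∈ U | ρ x + A * (ρ x) ^ 2 < 0} = Ω ∩ U := by
  set S := {e : Fin p → V | Orthonormal ℝ e ∧ φ e = 1}
  have hρ2 : ContDiffOn ℝ 2 ρ W := hρ.of_le (WithTop.coe_le_coe.2 le_top)
  have hKW : frontier Ω ⊆ W := frontier_subset_closure.trans hWcl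
  have hρK : ∀ x ∈ frontier Ω, ρ x = 0 := fun x hx => (hbdry ▸ hx).2
  have hS : IsCompact S := (isCompact_setOf_orthonormal (𝕜 := ℝ)).inter_right
    (isClosed_eq φ.toMultilinearMap.continuous_of_finiteDimensional continuous_const)
  obtain ⟨A₀, hA₀⟩ := eventually_atTop.1 <| eventually_hessianTrace_add_mul_sq_pos hρ2 hWo hKW
    (hΩb.isCompact_closure.of_isClosed_subset isClosed_frontier frontier_subset_closure) hS hρK
    fun x hx e he => hconv x hx e he.1 he.2
  refine ⟨max A₀ 1, by positivity, fun A hA => ?_⟩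
  have hρsq : ContDiffOn ℝ 2 (fun y => ρ y + A * ρ y ^ 2) W :=
    hρ2.add (contDiffOn_const.mul (hρ2.pow 2))
  refine ⟨{x ∈ W | ∀ e ∈ S, 0 < hessianTrace (fun y => ρ y + A * ρ y ^ 2) x e} ∩
    (W ∩ ρ ⁻¹' {t | 0 < 1 + A * t}), ?_, ?_, fun x hx => hx.2.1,
    fun x hx e he hφ => hx.1.2 e ⟨he, hφ⟩, fun x hx => ⟨?_, hgrad x hx⟩, ?_⟩
  · exact (hρsq.isOpen_setOf_forall_hessianTrace_pos hWo hS).inter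
      (hρ2.continuousOn.isOpen_inter_preimage hWo (isOpen_lt continuous_const (by fun_prop)))
  · exact fun x hx => ⟨⟨hKW hx, hA₀ A (le_of_max_le_left hA) x hx⟩, hKW hx, by simp [hρK x hx]⟩
  · have hρx := (hρ2.contDiffAt (hWo.mem_nhds (hKW hx))).differentiableAt (by simp)
    simpa [hρK x hx] using (hρx.hasFDerivAt.add_mul_sq A).fderiv
  · ext x
    simp only [hΩdef, mem_inter_iff, mem_ofPred_eq, mem_preimage]
    exact ⟨fun ⟨hxU, hneg⟩ => ⟨⟨hxU.2.1, (add_mul_sq_neg_iff hxU.2.2).1 hneg⟩, hxU⟩,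
      fun ⟨⟨_, hneg⟩, hxU⟩ => ⟨hxU, (add_mul_sq_neg_iff hxU.2.2).2 hneg⟩⟩

/-- Proposition 5.7 (Euclidean case): let `Ω` be a bounded open set with smooth defining
function `ρ` whose boundary is strictly `φ`-convex.  Then for all sufficiently large
`A > 0`, the function `ρ̄ = ρ + A·ρ²` is strictly `φ`-plurisubharmonic on a neighborhood
`U` of `∂Ω`, and is again a defining function for `∂Ω` there: `Dρ̄ = Dρ ≠ 0` on `∂Ω`
and `{ρ̄ < 0} ∩ U = Ω ∩ U`. -/
theorem defining_function_plus_square {p : ℕ} (hp : 1 ≤ p)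
    (φ : V [⋀^Fin p]→ₗ[ℝ] ℝ)
    (hcomass : ∀ e : Fin p → V, Orthonormal ℝ e → φ e ≤ 1)
    (Ω W : Set V) (hΩo : IsOpen Ω) (hΩb : Bornology.IsBounded Ω) (hWo : IsOpen W)
    (hWcl : closure Ω ⊆ W)
    (ρ : V → ℝ) (hρ : ContDiffOn ℝ (⊤ : ℕ∞) ρ W)
    (hΩdef : Ω = {x ∈ W | ρ x < 0})
    (hbdry : frontier Ω = {x ∈ W | ρ x = 0})
    (hgrad : ∀ x ∈ frontier Ω, fderiv ℝ ρ x ≠ 0)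
    (hconv : ∀ x ∈ frontier Ω, ∀ e : Fin p → V, Orthonormal ℝ e → φ e = 1 →
      (∀ j, fderiv ℝ ρ x (e j) = 0) →
      0 < ∑ j, iteratedFDeriv ℝ 2 ρ x ![e j, e j]) :
    ∃ A₀ : ℝ, 0 < A₀ ∧ ∀ A : ℝ, A₀ ≤ A →
      ∃ U : Set V, IsOpen U ∧ frontier Ω ⊆ U ∧ U ⊆ W ∧
        (∀ x ∈ U, ∀ e : Fin p → V, Orthonormal ℝ e → φ e = 1 →
          0 < ∑ j, iteratedFDeriv ℝ 2 (fun y => ρ y + A * (ρ y) ^ 2) x ![e j, e j]) ∧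
        (∀ x ∈ frontier Ω,
          fderiv ℝ (fun y => ρ y + A * (ρ y) ^ 2) x = fderiv ℝ ρ x ∧ fderiv ℝ ρ x ≠ 0) ∧
        {x ∈ U | ρ x + A * (ρ x) ^ 2 < 0} = Ω ∩ U :=
  defining_function_plus_square_general φ Ω W hΩb hWo hWcl ρ hρ hΩdef hbdry hgrad hconv
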